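/- arXiv:2103.15291 — 3 statements merged into one kernel-verified Lean document; each statement's English description precedes it below -/
import Mathlib

section
/- For integers n ≥ 0 and k, ∑_{j=0}^{n} S(n+1, j+1) · c_j^{(k)} = ∑_{i=0}^{n} C(n,i) / (i+1)^k, where S denotes the Stirling numbers of the second kind. -/
open Finset

/-- Unsigned Stirling numbers of the first kind. -/
def stirling1 : ℕ → ℕ → ℕ
  | 0, 0 => 1
  | 0, _ + 1 => 0
  | _ + 1, 0 => 0
  | n + 1, k + 1 => n * stirling1 n (k + 1) + stirling1 n k

/-- Stirling numbers of the second kind. -/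
def stirling2 : ℕ → ℕ → ℕ
  | 0, 0 => 1
  | 0, _ + 1 => 0
  | _ + 1, 0 => 0
  | n + 1, k + 1 => (k + 1) * stirling2 n (k + 1) + stirling2 n k

/-- Unsigned r-Stirling numbers of the first kind. -/
def rStirling1 (r : ℕ) : ℕ → ℕ → ℕ
  | 0, m => if r = 0 ∧ m = 0 then 1 else 0
  | n + 1, m =>
    if n + 1 < r then 0
    else if n + 1 = r then (if m = r then 1 else 0)
    else n * rStirling1 r n m + (match m with | 0 => 0 | m' + 1 => rStirling1 r n m')

/-- r-Stirling numbers of the second kind. -/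
def rStirling2 (r : ℕ) : ℕ → ℕ → ℕ
  | 0, m => if r = 0 ∧ m = 0 then 1 else 0
  | n + 1, m =>
    if n + 1 < r then 0
    else if n + 1 = r then (if m = r then 1 else 0)
    else m * rStirling2 r n m + (match m with | 0 => 0 | m' + 1 => rStirling2 r n m')

/-- Poly-Cauchy numbers of the first kind `c_n^{(k)}`. -/
noncomputable def polyCauchy (k : ℤ) (n : ℕ) : ℝ :=
  ∑ ℓ ∈ range (n + 1), (-1 : ℝ) ^ (n - ℓ) * stirling1 n ℓ / ((ℓ : ℝ) + 1) ^ k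

/-- Poly-Cauchy numbers of the second kind `ĉ_n^{(k)}`. -/
noncomputable def polyCauchy2 (k : ℤ) (n : ℕ) : ℝ :=
  (-1 : ℝ) ^ n * ∑ ℓ ∈ range (n + 1), (stirling1 n ℓ : ℝ) / ((ℓ : ℝ) + 1) ^ k

/-- Poly-Cauchy polynomials of the first kind `c_n^{(k)}(z)`. -/
noncomputable def polyCauchyPoly (k : ℤ) (n : ℕ) (z : ℝ) : ℝ :=
  ∑ m ∈ range (n + 1), (stirling1 n m : ℝ) * (-1 : ℝ) ^ (n - m) *
    ∑ i ∈ range (m + 1), (m.choose i : ℝ) * z ^ (m - i) / ((i : ℝ) + 1) ^ k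

/-- Shifted poly-Cauchy numbers of the first kind `c_{n,α}^{(k)}`. -/
noncomputable def shiftedPolyCauchy (k : ℤ) (n : ℕ) (α : ℝ) : ℝ :=
  ∑ m ∈ range (n + 1), (stirling1 n m : ℝ) * (-1 : ℝ) ^ (n - m) / ((m : ℝ) + α) ^ k

/-- Shifted poly-Cauchy numbers of the second kind `ĉ_{n,α}^{(k)}`. -/
noncomputable def shiftedPolyCauchy2 (k : ℤ) (n : ℕ) (α : ℝ) : ℝ :=
  (-1 : ℝ) ^ n * ∑ m ∈ range (n + 1), (stirling1 n m : ℝ) / ((m : ℝ) + α) ^ k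

/-! The polynomial `(X + 1) ^ n` expands in the falling factorial basis as
`∑ j, S(n+1, j+1) (X)_j`: multiplying by `X + 1 = (X - j) + (j + 1)` turns the coefficients of
`(X + 1) ^ n` into those of `(X + 1) ^ (n + 1)` by the recurrence of `S`. Since
`(X)_j = ∑ ℓ, (-1)^(j-ℓ) s(j, ℓ) X^ℓ`, comparing coefficients of `X^ℓ` gives
`∑ j, S(n+1, j+1) (-1)^(j-ℓ) s(j, ℓ) = C(n, ℓ)`, and exchanging the two sums in
`∑ j, S(n+1, j+1) c_j^{(k)}` yields the theorem. -/

open Nat Polynomial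

theorem stirling1_eq_stirlingFirst : stirling1 = stirlingFirst := by
  funext n k
  induction n generalizing k with
  | zero => cases k <;> rfl
  | succ n ih => cases k <;> simp [stirling1, stirlingFirst_succ_succ, ih]

theorem stirling2_eq_stirlingSecond : stirling2 = stirlingSecond := by
  funext n k
  induction n generalizing k with
  | zero => cases k <;> rfl
  | succ n ih => cases k <;> simp [stirling2, stirlingSecond_succ_succ, ih]

theorem coeff_descPochhammer {R : Type*} [CommRing R] (j ℓ : ℕ) :
    (descPochhammer R j).coeff ℓ = (-1) ^ (j - ℓ) * stirlingFirst j ℓ := by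
  induction j generalizing ℓ with
  | zero => cases ℓ <;> simp [coeff_one]
  | succ j ih =>
    cases ℓ with
    | zero => simp [descPochhammer_succ_left]
    | succ ℓ =>
      rw [descPochhammer_succ_right, ← map_natCast C, coeff_mul_X_sub_C, ih, ih,
        stirlingFirst_succ_succ, Nat.add_sub_add_right]
      rcases lt_or_ge ℓ j with h | h
      · rw [show j - ℓ = j - (ℓ + 1) + 1 by omega]
        push_cast
        ring
      · rw [stirlingFirst_eq_zero_of_lt (by omega : j < ℓ + 1)]
        simp

theorem X_add_one_pow_eq_sum_stirlingSecond_mul_descPochhammer {R : Type*} [CommRing R] (n : ℕ) :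
    (X + 1 : R[X]) ^ n =
      ∑ j ∈ range (n + 1), (stirlingSecond (n + 1) (j + 1) : R[X]) * descPochhammer R j := by
  induction n with
  | zero => simp [stirlingSecond_self]
  | succ n ih =>
    have h_mul : ∀ j : ℕ, descPochhammer R j * (X + 1) =
        descPochhammer R (j + 1) + ((j + 1 : ℕ) : R[X]) * descPochhammer R j := by
      intro j
      rw [descPochhammer_succ_right]
      push_cast
      ring
    have h_rec : ∀ j : ℕ, (stirlingSecond (n + 1 + 1) (j + 1) : R[X]) =
        ((j + 1 : ℕ) : R[X]) * stirlingSecond (n + 1) (j + 1) + stirlingSecond (n + 1) j := by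
      intro j
      rw [stirlingSecond_succ_succ]
      push_cast
      ring
    rw [pow_succ, ih, sum_mul]
    simp_rw [mul_assoc, h_mul, h_rec, add_mul, mul_add, sum_add_distrib]
    rw [sum_range_succ _ (n + 1), sum_range_succ' _ (n + 1)]
    simp only [stirlingSecond_eq_zero_of_lt (by omega : n + 1 < n + 1 + 1),
      stirlingSecond_succ_zero, Nat.cast_zero, mul_zero, zero_mul, add_zero]
    rw [add_comm]
    congr 1
    exact sum_congr rfl fun j _ => by ring

theorem sum_stirlingSecond_mul_signed_stirlingFirst {R : Type*} [CommRing R] (n ℓ : ℕ) :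
    ∑ j ∈ range (n + 1),
      (stirlingSecond (n + 1) (j + 1) : R) * ((-1) ^ (j - ℓ) * stirlingFirst j ℓ) = n.choose ℓ := by
  have h := congrArg (coeff · ℓ) (X_add_one_pow_eq_sum_stirlingSecond_mul_descPochhammer (R := R) n)
  simpa [coeff_X_add_one_pow, finsetSum_coeff, coeff_descPochhammer] using h.symm

theorem polyCauchy_eq_sum_range {k : ℤ} {j m : ℕ} (hjm : j ≤ m) :
    polyCauchy k j =
      ∑ ℓ ∈ range (m + 1), (-1 : ℝ) ^ (j - ℓ) * stirlingFirst j ℓ / ((ℓ : ℝ) + 1) ^ k := by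
  rw [polyCauchy, stirling1_eq_stirlingFirst]
  refine sum_subset (range_subset_range.2 (by omega)) fun ℓ _ hℓ => ?_
  rw [stirlingFirst_eq_zero_of_lt (by simpa using hℓ)]
  simp

theorem stmt4 (n : ℕ) (k : ℤ) :
    ∑ j ∈ Finset.range (n + 1), (stirling2 (n + 1) (j + 1) : ℝ) * polyCauchy k j =
      ∑ i ∈ Finset.range (n + 1), (n.choose i : ℝ) / ((i : ℝ) + 1) ^ k := by
  rw [stirling2_eq_stirlingSecond]
  calc ∑ j ∈ range (n + 1), (stirlingSecond (n + 1) (j + 1) : ℝ) * polyCauchy k j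
      = ∑ ℓ ∈ range (n + 1), ∑ j ∈ range (n + 1), (stirlingSecond (n + 1) (j + 1) : ℝ) *
          ((-1) ^ (j - ℓ) * stirlingFirst j ℓ / ((ℓ : ℝ) + 1) ^ k) := by
        rw [sum_comm]
        refine sum_congr rfl fun j hj => ?_
        rw [polyCauchy_eq_sum_range (Nat.lt_succ_iff.1 (mem_range.1 hj)), mul_sum]
    _ = ∑ ℓ ∈ range (n + 1), (n.choose ℓ : ℝ) / ((ℓ : ℝ) + 1) ^ k := by
        refine sum_congr rfl fun ℓ _ => ?_
        rw [← sum_stirlingSecond_mul_signed_stirlingFirst, sum_div]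
        exact sum_congr rfl fun j _ => by ring
end

section
/- For integers n, r, k with n ≥ r ≥ 1, the r-Stirling transform of the poly-Cauchy numbers of the second kind satisfies: ∑_{j=r}^{n} S_r(n,j) · ĉ_j^{(k)} = ∑_{ℓ=1}^{r} (-1)^n s(r,ℓ) / (n-r+ℓ+1)^k. -/
open Finset

/-! Write `T(n, m) = ∑_j S_r(n,j) (-1)^j s(j,m)` (`rStirling2MulStirling1`). Expanding `ĉ_j`
turns the left side into `∑_m T(n, m) / (m + 1)^k`. The recurrences of `S_r` and `s` combine to
`T(n + 1, m + 1) = -T(n, m)` for `n ≥ r`, while `T(n, 0) = 0` for `r ≥ 1` and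
`T(r, m) = (-1)^r s(r, m)`. Hence, for `n = r + d`, only `m = d + ℓ` with `1 ≤ ℓ ≤ r` contribute,
with `T(r + d, d + ℓ) = (-1)^n s(r, ℓ)`. -/

theorem stirling1_eq_zero_of_lt {n m : ℕ} (h : n < m) : stirling1 n m = 0 := by
  induction n generalizing m with
  | zero => obtain ⟨m, rfl⟩ := Nat.exists_eq_add_of_lt h; rfl
  | succ n ih =>
    obtain ⟨m, rfl⟩ := Nat.exists_eq_succ_of_ne_zero (by omega : m ≠ 0)
    simp [stirling1, ih (by omega : n < m + 1), ih (by omega : n < m)]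

theorem stirling1_zero_right {n : ℕ} (h : n ≠ 0) : stirling1 n 0 = 0 := by
  obtain ⟨n, rfl⟩ := Nat.exists_eq_succ_of_ne_zero h
  rfl

theorem rStirling2_succ_zero (r n : ℕ) : rStirling2 r (n + 1) 0 = 0 := by
  simp only [rStirling2]
  split_ifs <;> omega

theorem rStirling2_succ_succ {r n : ℕ} (h : r ≤ n) (j : ℕ) :
    rStirling2 r (n + 1) (j + 1) = (j + 1) * rStirling2 r n (j + 1) + rStirling2 r n j := by
  simp only [rStirling2, if_neg (by omega : ¬n + 1 < r), if_neg (by omega : n + 1 ≠ r)]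

theorem rStirling2_self (r j : ℕ) : rStirling2 r r j = if j = r then 1 else 0 := by
  cases r <;> simp [rStirling2]

theorem rStirling2_eq_zero_of_lt {r n j : ℕ} (h : n < j) : rStirling2 r n j = 0 := by
  induction n generalizing j with
  | zero => rw [rStirling2, if_neg (by omega)]
  | succ n ih =>
    obtain ⟨j, rfl⟩ := Nat.exists_eq_succ_of_ne_zero (by omega : j ≠ 0)
    rcases lt_trichotomy (n + 1) r with hr | hr | hr
    · simp [rStirling2, hr]
    · rw [← hr, rStirling2_self, if_neg (by omega)]
    · rw [rStirling2_succ_succ (by omega), ih (by omega), ih (by omega), mul_zero]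

theorem rStirling2_eq_zero_of_lt_r {r n j : ℕ} (h : j < r) : rStirling2 r n j = 0 := by
  induction n generalizing j with
  | zero => rw [rStirling2, if_neg (by omega)]
  | succ n ih =>
    rcases lt_trichotomy (n + 1) r with hr | hr | hr
    · simp [rStirling2, hr]
    · rw [← hr, rStirling2_self, if_neg (by omega)]
    · cases j with
      | zero => exact rStirling2_succ_zero r n
      | succ j => rw [rStirling2_succ_succ (by omega), ih h, ih (by omega), mul_zero]

section SignedProduct

variable (R : Type*) [CommRing R]

def rStirling2MulStirling1 (r n m : ℕ) : R :=
  ∑ j ∈ range (n + 1), (rStirling2 r n j : R) * (-1) ^ j * stirling1 j m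

variable {R}

theorem rStirling2MulStirling1_succ_succ {r n : ℕ} (h : r ≤ n) (m : ℕ) :
    rStirling2MulStirling1 R r (n + 1) (m + 1) = -rStirling2MulStirling1 R r n m := by
  set g : ℕ → R := fun i => i * rStirling2 r n i * (-1) ^ i * stirling1 i (m + 1) with hg
  have hshift : ∑ j ∈ range (n + 1), g (j + 1) = ∑ j ∈ range (n + 1), g j := by
    have h1 := sum_range_succ' g (n + 1)
    rw [sum_range_succ] at h1
    simpa [hg, rStirling2_eq_zero_of_lt (Nat.lt_succ_self n)] using h1.symm
  calc rStirling2MulStirling1 R r (n + 1) (m + 1)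
      = ∑ j ∈ range (n + 1),
          (g (j + 1) - (g j + (rStirling2 r n j : R) * (-1) ^ j * stirling1 j m)) := by
        rw [rStirling2MulStirling1, sum_range_succ', rStirling2_succ_zero, Nat.cast_zero,
          zero_mul, zero_mul, add_zero]
        refine sum_congr rfl fun j _ => ?_
        simp only [hg, rStirling2_succ_succ h, stirling1]
        push_cast
        ring
    _ = -rStirling2MulStirling1 R r n m := by
        rw [sum_sub_distrib, sum_add_distrib, hshift, rStirling2MulStirling1]
        ring

theorem rStirling2MulStirling1_zero_right {r : ℕ} (hr : 1 ≤ r) (n : ℕ) :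
    rStirling2MulStirling1 R r n 0 = 0 := by
  refine sum_eq_zero fun j _ => ?_
  cases j with
  | zero => simp [rStirling2_eq_zero_of_lt_r hr]
  | succ j => simp [stirling1]

theorem rStirling2MulStirling1_self (r m : ℕ) :
    rStirling2MulStirling1 R r r m = (-1) ^ r * stirling1 r m := by
  simp [rStirling2MulStirling1, rStirling2_self]

theorem rStirling2MulStirling1_add_add (r d m : ℕ) :
    rStirling2MulStirling1 R r (r + d) (d + m) = (-1) ^ (r + d) * stirling1 r m := by
  induction d with
  | zero => rw [add_zero, zero_add, rStirling2MulStirling1_self]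
  | succ d ih =>
    rw [← add_assoc, Nat.add_right_comm d,
      rStirling2MulStirling1_succ_succ (Nat.le_add_right r d), ih, pow_succ]
    ring

theorem rStirling2MulStirling1_of_lt {r : ℕ} (hr : 1 ≤ r) {d m : ℕ} (h : m < d) :
    rStirling2MulStirling1 R r (r + d) m = 0 := by
  induction d generalizing m with
  | zero => omega
  | succ d ih =>
    cases m with
    | zero => exact rStirling2MulStirling1_zero_right hr _
    | succ m =>
      rw [← add_assoc, rStirling2MulStirling1_succ_succ (Nat.le_add_right r d), ih (by omega),
        neg_zero]

end SignedProduct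

theorem polyCauchy2_eq_sum_range {j N : ℕ} (h : j ≤ N) (k : ℤ) :
    polyCauchy2 k j = (-1) ^ j * ∑ m ∈ range (N + 1), (stirling1 j m : ℝ) / ((m : ℝ) + 1) ^ k := by
  rw [polyCauchy2, sum_subset (range_subset_range.mpr (by omega : j + 1 ≤ N + 1))]
  intro m _ hm
  rw [stirling1_eq_zero_of_lt (by simpa using hm), Nat.cast_zero, zero_div]

theorem sum_rStirling2_mul_polyCauchy2 (r n : ℕ) (k : ℤ) :
    ∑ j ∈ Icc r n, (rStirling2 r n j : ℝ) * polyCauchy2 k j =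
      ∑ m ∈ range (n + 1), rStirling2MulStirling1 ℝ r n m / ((m : ℝ) + 1) ^ k := by
  have hrange : ∑ j ∈ Icc r n, (rStirling2 r n j : ℝ) * polyCauchy2 k j =
      ∑ j ∈ range (n + 1), (rStirling2 r n j : ℝ) * polyCauchy2 k j := by
    refine sum_subset (fun j hj => ?_) fun j _ hj => ?_
    · simp only [mem_Icc, mem_range] at hj ⊢
      omega
    · rw [rStirling2_eq_zero_of_lt_r (by simp_all), Nat.cast_zero, zero_mul]
  simp only [hrange, rStirling2MulStirling1, sum_div]
  rw [sum_comm]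
  refine sum_congr rfl fun j hj => ?_
  rw [polyCauchy2_eq_sum_range (mem_range_succ_iff.mp hj), mul_sum, mul_sum]
  refine sum_congr rfl fun m _ => ?_
  ring

theorem stmt6 (n r : ℕ) (k : ℤ) (hr : 1 ≤ r) (hn : r ≤ n) :
    ∑ j ∈ Finset.Icc r n, (rStirling2 r n j : ℝ) * polyCauchy2 k j =
      ∑ ℓ ∈ Finset.Icc 1 r, (-1 : ℝ) ^ n * (stirling1 r ℓ : ℝ) /
        ((n + ℓ - r + 1 : ℕ) : ℝ) ^ k := by
  obtain ⟨d, rfl⟩ := Nat.exists_eq_add_of_le hn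
  have hbelow : ∑ m ∈ range d, rStirling2MulStirling1 ℝ r (r + d) m / ((m : ℝ) + 1) ^ k = 0 :=
    sum_eq_zero fun m hm => by rw [rStirling2MulStirling1_of_lt hr (mem_range.mp hm), zero_div]
  rw [sum_rStirling2_mul_polyCauchy2, show r + d + 1 = d + (r + 1) by ring, sum_range_add, hbelow,
    zero_add, sum_range_succ', ← Ico_add_one_right_eq_Icc, sum_Ico_eq_sum_range, Nat.add_sub_cancel]
  simp only [rStirling2MulStirling1_add_add]
  rw [stirling1_zero_right (by omega), Nat.cast_zero, mul_zero, zero_div, add_zero]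
  refine sum_congr rfl fun ℓ _ => ?_
  rw [add_comm 1 ℓ, show r + d + (ℓ + 1) - r = d + (ℓ + 1) by omega, Nat.cast_succ]
end

section
/- For integers n ≥ r ≥ 0, ∑_{k} s_r(n,k) z^k = z^r (z+r)(z+r+1)⋯(z+n-1) as polynomials in z, where s_r denotes the unsigned r-Stirling numbers of the first kind. -/
open Finset

variable {R : Type*} [CommSemiring R]

theorem rStirling1_eq_zero_of_lt (r : ℕ) {n k : ℕ} (h : n < k) : rStirling1 r n k = 0 := by
  induction n generalizing k with
  | zero =>
    have : ¬(r = 0 ∧ k = 0) := by omega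
    simp [rStirling1, this]
  | succ n ih =>
    obtain ⟨k, rfl⟩ : ∃ k', k = k' + 1 := ⟨k - 1, by omega⟩
    simp only [rStirling1, ih (show n < k + 1 by omega), ih (show n < k by omega)]
    split_ifs <;> omega

theorem rStirling1_self (r m : ℕ) : rStirling1 r r m = if m = r then 1 else 0 := by
  cases r <;> simp [rStirling1]

theorem rStirling1_succ_zero {r n : ℕ} (h : r ≤ n) :
    rStirling1 r (n + 1) 0 = n * rStirling1 r n 0 := by
  simp [rStirling1, show ¬n + 1 < r by omega, show n + 1 ≠ r by omega]

theorem rStirling1_succ_succ {r n : ℕ} (h : r ≤ n) (k : ℕ) :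
    rStirling1 r (n + 1) (k + 1) = n * rStirling1 r n (k + 1) + rStirling1 r n k := by
  simp [rStirling1, show ¬n + 1 < r by omega, show n + 1 ≠ r by omega]

theorem sum_rStirling1_self_mul_pow (r : ℕ) (z : R) :
    ∑ k ∈ range (r + 1), (rStirling1 r r k : R) * z ^ k = z ^ r := by
  simp [rStirling1_self]

theorem sum_rStirling1_succ_mul_pow {r n : ℕ} (h : r ≤ n) (z : R) :
    ∑ k ∈ range (n + 2), (rStirling1 r (n + 1) k : R) * z ^ k =
      (z + n) * ∑ k ∈ range (n + 1), (rStirling1 r n k : R) * z ^ k := by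
  have hshift : ∑ k ∈ range (n + 1), (rStirling1 r n (k + 1) : R) * z ^ (k + 1) +
      (rStirling1 r n 0 : R) = ∑ k ∈ range (n + 1), (rStirling1 r n k : R) * z ^ k := by
    rw [sum_range_succ (fun k ↦ (rStirling1 r n (k + 1) : R) * z ^ (k + 1)),
      rStirling1_eq_zero_of_lt r (Nat.lt_succ_self n), sum_range_succ' _ n]
    simp
  calc ∑ k ∈ range (n + 2), (rStirling1 r (n + 1) k : R) * z ^ k
      = ∑ k ∈ range (n + 1), ((n : R) * rStirling1 r n (k + 1) + rStirling1 r n k) * z ^ (k + 1) +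
          n * rStirling1 r n 0 := by
        simp [sum_range_succ' _ (n + 1), rStirling1_succ_zero h, rStirling1_succ_succ h]
    _ = n * (∑ k ∈ range (n + 1), (rStirling1 r n (k + 1) : R) * z ^ (k + 1) + rStirling1 r n 0) +
          z * ∑ k ∈ range (n + 1), (rStirling1 r n k : R) * z ^ k := by
        have hterm : ∀ k, ((n : R) * rStirling1 r n (k + 1) + rStirling1 r n k) * z ^ (k + 1) =
            n * ((rStirling1 r n (k + 1) : R) * z ^ (k + 1)) + z * ((rStirling1 r n k : R) * z ^ k) :=
          fun k ↦ by ring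
        rw [sum_congr rfl fun k _ ↦ hterm k, sum_add_distrib, ← mul_sum, ← mul_sum]
        ring
    _ = (z + n) * ∑ k ∈ range (n + 1), (rStirling1 r n k : R) * z ^ k := by
        rw [hshift]; ring

theorem sum_rStirling1_mul_pow {r n : ℕ} (h : r ≤ n) (z : R) :
    ∑ k ∈ range (n + 1), (rStirling1 r n k : R) * z ^ k = z ^ r * ∏ i ∈ Ico r n, (z + i) := by
  induction n, h using Nat.le_induction with
  | base => simp [sum_rStirling1_self_mul_pow]
  | succ n hrn ih =>
    rw [sum_rStirling1_succ_mul_pow hrn, ih, prod_Ico_succ_top hrn]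
    ring

theorem stmt12 (n r : ℕ) (hn : r ≤ n) (z : ℝ) :
    ∑ k ∈ Finset.range (n + 1), (rStirling1 r n k : ℝ) * z ^ k =
      z ^ r * ∏ i ∈ Finset.Ico r n, (z + (i : ℝ)) :=
  sum_rStirling1_mul_pow hn z
end
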